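/- For every constant K ≥ 1 there exists a constant C = C(K) > 0 with the following property. Let X ∈ ℝ^{d_in×r} have rank r, let κ = σ_max(X)²/σ_min(X)², and let W_1(0), …, W_L(0) be weight matrices of a depth-L width-m linear network satisfying ‖W_{b:a}(0)‖ ≤ K·√L·m^{(b−a+1)/2} for all 1 < a ≤ b < L and σ_max(W_{a:1}(0)·X) ≤ 1.2·m^{a/2}·σ_max(X) for all 1 ≤ a < L. Let R > 0, let Δ_1, …, Δ_L be matrices of matching shapes with ‖Δ_i‖_F ≤ R for every i, and set W_i = W_i(0) + Δ_i. If m ≥ C·L³·R²·κ, then for all 1 ≤ i < L, ‖(W_{i:1} − W_{i:1}(0))·X‖ ≤ 0.05·m^{i/2}·σ_min(X). -/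

import Mathlib

/-!
Write `W_{i:1}X` and `W⁰_{i:1}X` for the perturbed and the initial bottom products. Their
difference telescopes into `W⁰_{i:2} Δ_1 X + Σ_j W⁰_{i:j+2} Δ_{j+1} W_{j:1} X`; keeping each
initial block `W⁰_{i:j+2}` whole, its norm costs a single factor `K√L` by the first hypothesis,
instead of one such factor per layer. With `q = K√L R / √m`, strong induction on `i` then gives
`‖(W_{i:1} - W⁰_{i:1}) X‖ ≤ ((1 + q)^i - 1) · 1.2 m^{i/2} σ_max(X)`.
The width condition with `C = 48² K²` says `48 L q σ_max(X) ≤ σ_min(X)`, where `σ_min(X) > 0`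
by full column rank; hence `i q ≤ 1`, `(1 + q)^i - 1 ≤ e^{iq} - 1 ≤ 2 i q`, and the bound falls
below `0.05 m^{i/2} σ_min(X)`.
-/

open MeasureTheory ProbabilityTheory Matrix
open scoped BigOperators ENNReal

noncomputable section

/-- `W_j * W_{j-1} * ⋯ * W_i` for a family of square matrices (identity if `j < i`). -/
def midProd {m : ℕ} (W : ℕ → Matrix (Fin m) (Fin m) ℝ) (i j : ℕ) :
    Matrix (Fin m) (Fin m) ℝ :=
  (((List.range' i (j + 1 - i)).reverse).map W).prod

/-- Euclidean norm of a vector. -/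
def enorm' {a : ℕ} (v : Fin a → ℝ) : ℝ := Real.sqrt (∑ i, v i ^ 2)

/-- Largest singular value (spectral norm): supremum of `‖A v‖` over unit vectors `v`. -/
def smax {a b : ℕ} (A : Matrix (Fin a) (Fin b) ℝ) : ℝ :=
  ⨆ v : {v : Fin b → ℝ // ∑ j, v j ^ 2 = 1}, enorm' (A.mulVec v.1)

/-- Smallest singular value: infimum of `‖A v‖` over unit vectors `v`. -/
def smin {a b : ℕ} (A : Matrix (Fin a) (Fin b) ℝ) : ℝ :=
  ⨅ v : {v : Fin b → ℝ // ∑ j, v j ^ 2 = 1}, enorm' (A.mulVec v.1)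

/-- Squared Frobenius norm of a matrix. -/
def frobSq {a b : ℕ} (A : Matrix (Fin a) (Fin b) ℝ) : ℝ := ∑ i, ∑ j, A i j ^ 2

/-- Frobenius norm of a matrix. -/
def frob {a b : ℕ} (A : Matrix (Fin a) (Fin b) ℝ) : ℝ := Real.sqrt (frobSq A)

/-- Index type for all the entries of the weight matrices
`W_1 ∈ ℝ^{m×din}`, `W_2, …, W_{L-1} ∈ ℝ^{m×m}`, `W_L ∈ ℝ^{dout×m}`. -/
def InitIdx (L m din dout : ℕ) : Type :=
  (Fin m × Fin din) ⊕ (({k : ℕ // 2 ≤ k ∧ k ≤ L - 1}) × (Fin m × Fin m)) ⊕ (Fin dout × Fin m)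

/-- The family of all entries of the weight matrices. -/
def initEntry {Ω : Type*} (L m din dout : ℕ)
    (W1 : Ω → Matrix (Fin m) (Fin din) ℝ)
    (Wmid : ℕ → Ω → Matrix (Fin m) (Fin m) ℝ)
    (WL : Ω → Matrix (Fin dout) (Fin m) ℝ) :
    InitIdx L m din dout → Ω → ℝ :=
  fun idx ω =>
    match idx with
    | Sum.inl p => W1 ω p.1 p.2
    | Sum.inr (Sum.inl p) => Wmid p.1.1 ω p.2.1 p.2.2
    | Sum.inr (Sum.inr p) => WL ω p.1 p.2

open scoped Matrix.Norms.L2Operator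

section SingularValues

variable {a b : ℕ}

lemma enorm'_eq_norm (v : Fin a → ℝ) : enorm' v = ‖WithLp.toLp 2 v‖ := by
  simp [enorm', EuclideanSpace.norm_eq, sq_abs]

lemma range_enorm'_mulVec_eq_image_sphere (A : Matrix (Fin a) (Fin b) ℝ) :
    Set.range (fun v : {v : Fin b → ℝ // ∑ j, v j ^ 2 = 1} => enorm' (A *ᵥ v.1)) =
      (fun x => ‖(toEuclideanLin.trans LinearMap.toContinuousLinearMap) A x‖) ''
        Metric.sphere 0 1 := by
  have hsphere : ∀ v : Fin b → ℝ, ∑ j, v j ^ 2 = 1 ↔ ‖WithLp.toLp 2 v‖ = 1 := by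
    intro v
    rw [← enorm'_eq_norm, enorm', Real.sqrt_eq_one]
  ext y
  constructor
  · rintro ⟨⟨v, hv⟩, rfl⟩
    exact ⟨WithLp.toLp 2 v, by simpa using (hsphere v).1 hv, by simp [enorm'_eq_norm]⟩
  · rintro ⟨x, hx, rfl⟩
    obtain ⟨v, rfl⟩ : ∃ v, WithLp.toLp 2 v = x := ⟨x.ofLp, rfl⟩
    exact ⟨⟨v, (hsphere v).2 (by simpa using hx)⟩, by simp [enorm'_eq_norm]⟩

lemma smax_eq_l2_opNorm (A : Matrix (Fin a) (Fin b) ℝ) : smax A = ‖A‖ := by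
  rw [smax, iSup, range_enorm'_mulVec_eq_image_sphere, ContinuousLinearMap.sSup_sphere_eq_norm,
    l2_opNorm_def]

lemma smin_nonneg (A : Matrix (Fin a) (Fin b) ℝ) : 0 ≤ smin A :=
  Real.iInf_nonneg fun _ => Real.sqrt_nonneg _

lemma smin_eq_sInf_image_sphere (A : Matrix (Fin a) (Fin b) ℝ) :
    smin A = sInf ((fun x => ‖(toEuclideanLin.trans LinearMap.toContinuousLinearMap) A x‖) ''
        Metric.sphere 0 1) := by
  rw [smin, iInf, range_enorm'_mulVec_eq_image_sphere]

lemma smin_le_smax (hb : 0 < b) (A : Matrix (Fin a) (Fin b) ℝ) : smin A ≤ smax A := by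
  have : Nonempty (Fin b) := ⟨⟨0, hb⟩⟩
  obtain ⟨x, hx⟩ :=
    (NormedSpace.sphere_nonempty (x := (0 : EuclideanSpace ℝ (Fin b)))).2 zero_le_one
  rw [smin_eq_sInf_image_sphere, smax_eq_l2_opNorm, l2_opNorm_def]
  refine (csInf_le (⟨0, ?_⟩ : BddBelow _) (Set.mem_image_of_mem _ hx)).trans ?_
  · rintro _ ⟨y, -, rfl⟩
    exact norm_nonneg _
  · exact ContinuousLinearMap.unit_le_opNorm _ _ (mem_sphere_zero_iff_norm.1 hx).le

lemma ker_toEuclideanLin_eq_bot_of_rank_eq (A : Matrix (Fin a) (Fin b) ℝ) (hA : A.rank = b) :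
    LinearMap.ker (toEuclideanLin A) = ⊥ := by
  have hker : LinearMap.ker A.mulVecLin = ⊥ := by
    have := LinearMap.finrank_range_add_finrank_ker A.mulVecLin
    rw [← rank, hA, Module.finrank_fin_fun] at this
    exact Submodule.finrank_eq_zero.mp (by omega)
  refine LinearMap.ker_eq_bot.2 fun x y hxy => ?_
  have : A *ᵥ x.ofLp = A *ᵥ y.ofLp := by simpa using congrArg WithLp.ofLp hxy
  exact WithLp.ofLp_injective 2 (LinearMap.ker_eq_bot.1 hker this)

lemma smin_pos_of_rank_eq (hb : 0 < b) (A : Matrix (Fin a) (Fin b) ℝ) (hA : A.rank = b) :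
    0 < smin A := by
  obtain ⟨K, hK, hanti⟩ :=
    (toEuclideanLin A).exists_antilipschitzWith (ker_toEuclideanLin_eq_bot_of_rank_eq A hA)
  have : Nonempty (Fin b) := ⟨⟨0, hb⟩⟩
  rw [smin_eq_sInf_image_sphere]
  refine (inv_pos.2 (NNReal.coe_pos.2 hK)).trans_le (le_csInf ?_ ?_)
  · exact ((NormedSpace.sphere_nonempty (x := (0 : EuclideanSpace ℝ (Fin b)))).2
      zero_le_one).image _
  rintro _ ⟨x, hx, rfl⟩
  have := hanti.le_mul_norm (map_zero _) x
  rw [mem_sphere_zero_iff_norm.1 hx] at this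
  exact (inv_le_iff_one_le_mul₀' (NNReal.coe_pos.2 hK)).2 (by simpa using this)

lemma enorm'_mulVec_le_frob_mul (A : Matrix (Fin a) (Fin b) ℝ) (v : Fin b → ℝ) :
    enorm' (A *ᵥ v) ≤ frob A * enorm' v := by
  rw [enorm', frob, enorm', ← Real.sqrt_mul (by unfold frobSq; positivity)]
  refine Real.sqrt_le_sqrt ?_
  rw [frobSq, Finset.sum_mul]
  exact Finset.sum_le_sum fun i _ => by
    simpa [mulVec, dotProduct] using Finset.sum_mul_sq_le_sq_mul_sq Finset.univ (A i) v

lemma l2_opNorm_le_frob (A : Matrix (Fin a) (Fin b) ℝ) : ‖A‖ ≤ frob A := by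
  rw [l2_opNorm_def]
  refine ContinuousLinearMap.opNorm_le_bound _ (Real.sqrt_nonneg _) fun x => ?_
  obtain ⟨v, rfl⟩ : ∃ v, WithLp.toLp 2 v = x := ⟨x.ofLp, rfl⟩
  simpa [enorm'_eq_norm] using enorm'_mulVec_le_frob_mul A v

end SingularValues

section Products

variable {m n : ℕ}

lemma midProd_of_lt (W : ℕ → Matrix (Fin m) (Fin m) ℝ) {i j : ℕ} (h : j < i) :
    midProd W i j = 1 := by
  simp [midProd, Nat.sub_eq_zero_of_le h]

lemma midProd_succ (W : ℕ → Matrix (Fin m) (Fin m) ℝ) {i j : ℕ} (h : i ≤ j + 1) :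
    midProd W i (j + 1) = W (j + 1) * midProd W i j := by
  rw [midProd, midProd, show j + 1 + 1 - i = j + 1 - i + 1 by omega, List.range'_1_concat,
    show i + (j + 1 - i) = j + 1 by omega]
  simp

/-- Telescoping: `A_i ⋯ A_{t+1} P - B_i ⋯ B_{t+1} Q` expanded one layer difference at a time. -/
lemma midProd_mul_sub_midProd_mul (A B : ℕ → Matrix (Fin m) (Fin m) ℝ)
    (P Q : Matrix (Fin m) (Fin n) ℝ) {t i : ℕ} (hti : t ≤ i) :
    midProd A (t + 1) i * P - midProd B (t + 1) i * Q =
      midProd B (t + 1) i * (P - Q) +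
        ∑ j ∈ Finset.Ico t i, midProd B (j + 2) i * ((A (j + 1) - B (j + 1)) *
          (midProd A (t + 1) j * P)) := by
  induction i, hti using Nat.le_induction with
  | base => simp [midProd_of_lt]
  | succ i hti ih =>
    rw [midProd_succ A (by omega), midProd_succ B (by omega), Finset.sum_Ico_succ_top hti,
      midProd_of_lt B (by omega : i + 1 < i + 2), Matrix.one_mul]
    have hshift : ∀ j ∈ Finset.Ico t i,
        midProd B (j + 2) (i + 1) = B (i + 1) * midProd B (j + 2) i :=
      fun j hj => midProd_succ B (by simp at hj; omega)
    rw [Finset.sum_congr rfl fun j hj => by rw [hshift j hj]]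
    simp only [Matrix.mul_assoc, ← Matrix.mul_sum]
    rw [← add_assoc, ← Matrix.mul_add, ← ih]
    simp only [Matrix.mul_sub, Matrix.sub_mul]
    abel

end Products

section PerturbationBound

variable {m n L : ℕ} {κ R μ s : ℝ}

lemma l2_opNorm_one_le : ‖(1 : Matrix (Fin m) (Fin m) ℝ)‖ ≤ 1 := by
  rw [cstar_norm_def, map_one]
  exact ContinuousLinearMap.norm_id_le

lemma norm_midProd_le (hκ : 1 ≤ κ) {B : ℕ → Matrix (Fin m) (Fin m) ℝ}
    (hB : ∀ a b, 1 < a → a ≤ b → b < L → ‖midProd B a b‖ ≤ κ * μ ^ (b + 1 - a))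
    {a b : ℕ} (ha : 1 < a) (hab : a ≤ b + 1) (hb : b < L) :
    ‖midProd B a b‖ ≤ κ * μ ^ (b + 1 - a) := by
  rcases hab.lt_or_eq with hab | rfl
  · exact hB a b ha (by omega) hb
  · rw [midProd_of_lt B (by omega), Nat.sub_self, pow_zero, mul_one]
    exact l2_opNorm_one_le.trans hκ

lemma norm_midProd_mul_le (hκ : 1 ≤ κ) (hμ : 0 < μ) {B : ℕ → Matrix (Fin m) (Fin m) ℝ}
    (hB : ∀ a b, 1 < a → a ≤ b → b < L → ‖midProd B a b‖ ≤ κ * μ ^ (b + 1 - a))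
    {Z : Matrix (Fin m) (Fin n) ℝ} {c : ℝ} {i j : ℕ} (hji : j < i) (hiL : i < L)
    (hZ : ‖Z‖ ≤ c * μ ^ j) :
    ‖midProd B (j + 2) i * Z‖ ≤ κ / μ * c * μ ^ i := by
  have hpow : μ ^ i = μ ^ (i + 1 - (j + 2)) * μ ^ j * μ := by
    rw [← pow_add, ← pow_succ]; congr 1; omega
  calc ‖midProd B (j + 2) i * Z‖ ≤ κ * μ ^ (i + 1 - (j + 2)) * (c * μ ^ j) :=
        (l2_opNorm_mul _ _).trans (mul_le_mul (norm_midProd_le hκ hB (by omega) (by omega) hiL)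
          hZ (norm_nonneg _) (by positivity))
    _ = κ / μ * c * μ ^ i := by rw [hpow]; field_simp

theorem norm_midProd_mul_sub_midProd_mul_le (hκ : 1 ≤ κ) (hR : 0 ≤ R) (hμ : 0 < μ)
    {A B : ℕ → Matrix (Fin m) (Fin m) ℝ} {P Q : Matrix (Fin m) (Fin n) ℝ}
    (hB : ∀ a b, 1 < a → a ≤ b → b < L → ‖midProd B a b‖ ≤ κ * μ ^ (b + 1 - a))
    (hQ : ∀ j, 1 ≤ j → j < L → ‖midProd B 2 j * Q‖ ≤ μ ^ j * s)
    (hAB : ∀ k, 2 ≤ k → k < L → ‖A k - B k‖ ≤ R) (hPQ : ‖P - Q‖ ≤ R * s) :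
    ∀ i, 1 ≤ i → i < L →
      ‖midProd A 2 i * P - midProd B 2 i * Q‖ ≤ ((1 + κ * R / μ) ^ i - 1) * (μ ^ i * s) := by
  set q := κ * R / μ
  intro i
  induction i using Nat.strong_induction_on with
  | _ i ih =>
  intro hi hiL
  have hfirst : ‖midProd B 2 i * (P - Q)‖ ≤ q * (1 + q) ^ 0 * (μ ^ i * s) := by
    refine (norm_midProd_mul_le (j := 0) hκ hμ hB hi hiL (c := R * s) ?_).trans_eq ?_
    · simpa using hPQ
    · ring
  have hterm : ∀ j ∈ Finset.Ico 1 i,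
      ‖midProd B (j + 2) i * ((A (j + 1) - B (j + 1)) * (midProd A 2 j * P))‖ ≤
        q * (1 + q) ^ j * (μ ^ i * s) := by
    intro j hj
    obtain ⟨hj1, hji⟩ := Finset.mem_Ico.1 hj
    have hbottom : ‖midProd A 2 j * P‖ ≤ (1 + q) ^ j * (μ ^ j * s) :=
      calc ‖midProd A 2 j * P‖
          ≤ ‖midProd B 2 j * Q‖ + ‖midProd A 2 j * P - midProd B 2 j * Q‖ := norm_le_insert' _ _
        _ ≤ μ ^ j * s + ((1 + q) ^ j - 1) * (μ ^ j * s) :=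
            add_le_add (hQ j hj1 (by omega)) (ih j hji hj1 (by omega))
        _ = (1 + q) ^ j * (μ ^ j * s) := by ring
    refine (norm_midProd_mul_le hκ hμ hB hji hiL (c := R * ((1 + q) ^ j * s)) ?_).trans_eq ?_
    · refine (l2_opNorm_mul _ _).trans ((mul_le_mul (hAB _ (by omega) (by omega)) hbottom
        (norm_nonneg _) hR).trans_eq ?_)
      ring
    · ring
  calc ‖midProd A 2 i * P - midProd B 2 i * Q‖
      ≤ ‖midProd B 2 i * (P - Q)‖ + ∑ j ∈ Finset.Ico 1 i,
          ‖midProd B (j + 2) i * ((A (j + 1) - B (j + 1)) * (midProd A 2 j * P))‖ := by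
        rw [midProd_mul_sub_midProd_mul (t := 1) A B P Q hi]
        exact (norm_add_le _ _).trans (add_le_add le_rfl (norm_sum_le _ _))
    _ ≤ ∑ j ∈ Finset.range i, q * (1 + q) ^ j * (μ ^ i * s) := by
        rw [Finset.range_eq_Ico, Finset.sum_eq_sum_Ico_succ_bot hi]
        exact add_le_add hfirst (Finset.sum_le_sum hterm)
    _ = ((1 + q) ^ i - 1) * (μ ^ i * s) := by
        rw [← geom_sum_mul, Finset.sum_mul, Finset.sum_mul]
        exact Finset.sum_congr rfl fun j _ => by ring

end PerturbationBound

lemma one_add_pow_sub_one_le {q : ℝ} (hq : 0 ≤ q) {n : ℕ} (hnq : n * q ≤ 1) :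
    (1 + q) ^ n - 1 ≤ 2 * (n * q) := by
  have hexp : (1 + q) ^ n ≤ Real.exp (n * q) := by
    rw [Real.exp_nat_mul]
    exact pow_le_pow_left₀ (by linarith) (by linarith [Real.add_one_le_exp q]) n
  have hnq0 : 0 ≤ n * q := by positivity
  have hexp_sub := Real.abs_exp_sub_one_le (x := n * q) (by rwa [abs_of_nonneg hnq0])
  rw [abs_of_nonneg hnq0, abs_of_nonneg (by linarith [Real.add_one_le_exp (n * q)])] at hexp_sub
  linarith

lemma rpow_natCast_div_two {x : ℝ} (hx : 0 ≤ x) (k : ℕ) : x ^ ((k : ℝ) / 2) = √x ^ k := by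
  rw [Real.sqrt_eq_rpow, ← Real.rpow_mul_natCast hx]
  ring_nf

lemma mul_div_sqrt_mul_le_of_sq_div_sq_le {K L R w σ τ : ℝ} (hK : 0 ≤ K) (hL : 0 ≤ L) (hR : 0 ≤ R)
    (hw : 0 < w) (hσ : 0 ≤ σ) (hτ : 0 < τ)
    (h : 2304 * K ^ 2 * L ^ 3 * R ^ 2 * (σ ^ 2 / τ ^ 2) ≤ w) :
    K * √L * R / √w * (48 * L * σ) ≤ τ := by
  rw [← pow_le_pow_iff_left₀ (by positivity) hτ.le two_ne_zero, mul_pow, div_pow, mul_pow,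
    mul_pow, Real.sq_sqrt hL, Real.sq_sqrt hw.le, div_mul_eq_mul_div, div_le_iff₀ hw]
  rw [mul_div_assoc', div_le_iff₀ (by positivity)] at h
  linarith

lemma one_add_pow_sub_one_mul_le {q σ τ P : ℝ} {i L : ℕ} (hq : 0 ≤ q) (hτ : 0 < τ) (hτσ : τ ≤ σ)
    (hP : 0 ≤ P) (hiL : i ≤ L) (hqσ : q * (48 * L * σ) ≤ τ) :
    ((1 + q) ^ i - 1) * (1.2 * P * σ) ≤ 0.05 * P * τ := by
  have hσ : 0 < σ := hτ.trans_le hτσ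
  have hiqσ : i * q * σ ≤ L * q * σ := by gcongr
  have hiq : i * q ≤ 1 := le_of_mul_le_mul_right (by nlinarith) hσ
  have hfinal : 2 * (i * q) * (1.2 * σ) ≤ 0.05 * τ := by nlinarith
  calc ((1 + q) ^ i - 1) * (1.2 * P * σ) ≤ 2 * (i * q) * (1.2 * P * σ) := by
        gcongr
        exact one_add_pow_sub_one_le hq hiq
    _ ≤ 0.05 * P * τ := by nlinarith

theorem smax_midProd_mul_sub_midProd_mul_le {L m din r i : ℕ} {K R : ℝ} (hm : 0 < m)
    (hK : 1 ≤ K) (hR : 0 ≤ R) {X : Matrix (Fin din) (Fin r) ℝ}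
    {W10 Δ1 : Matrix (Fin m) (Fin din) ℝ} {Wmid0 Δmid : ℕ → Matrix (Fin m) (Fin m) ℝ}
    (hW : ∀ a b : ℕ, 1 < a → a ≤ b → b < L →
      smax (midProd Wmid0 a b) ≤ K * √L * (m : ℝ) ^ (((b : ℝ) - a + 1) / 2))
    (hWX : ∀ a : ℕ, 1 ≤ a → a < L →
      smax (midProd Wmid0 2 a * W10 * X) ≤ 1.2 * (m : ℝ) ^ ((a : ℝ) / 2) * smax X)
    (hΔ1 : frob Δ1 ≤ R) (hΔmid : ∀ k, 2 ≤ k → k ≤ L - 1 → frob (Δmid k) ≤ R)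
    (hi : 1 ≤ i) (hiL : i < L) :
    smax ((midProd (fun k => Wmid0 k + Δmid k) 2 i * (W10 + Δ1) - midProd Wmid0 2 i * W10) * X) ≤
      ((1 + K * √L * R / √m) ^ i - 1) * (1.2 * (m : ℝ) ^ ((i : ℝ) / 2) * smax X) := by
  have hm0 : (0 : ℝ) < m := by exact_mod_cast hm
  have hpow : ∀ k : ℕ, (m : ℝ) ^ ((k : ℝ) / 2) = √m ^ k := rpow_natCast_div_two hm0.le
  have hκ : 1 ≤ K * √L :=
    one_le_mul_of_one_le_of_one_le hK (Real.one_le_sqrt.2 (by exact_mod_cast hi.trans hiL.le))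
  have hB : ∀ a b, 1 < a → a ≤ b → b < L →
      ‖midProd Wmid0 a b‖ ≤ K * √L * √m ^ (b + 1 - a) := fun a b ha hab hb => by
    have h := hW a b ha hab hb
    rwa [smax_eq_l2_opNorm, show (b : ℝ) - a + 1 = ((b + 1 - a : ℕ) : ℝ) by
      push_cast [Nat.cast_sub (by omega : a ≤ b + 1)]; ring, hpow] at h
  have hQ : ∀ j, 1 ≤ j → j < L → ‖midProd Wmid0 2 j * (W10 * X)‖ ≤ √m ^ j * (1.2 * ‖X‖) :=
    fun j hj hjL => by
      have h := hWX j hj hjL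
      rw [smax_eq_l2_opNorm, smax_eq_l2_opNorm, hpow] at h
      rw [← Matrix.mul_assoc]
      linarith
  have hAB : ∀ k, 2 ≤ k → k < L → ‖(Wmid0 k + Δmid k) - Wmid0 k‖ ≤ R := fun k hk hkL => by
    rw [add_sub_cancel_left]
    exact (l2_opNorm_le_frob _).trans (hΔmid k hk (by omega))
  have hPQ : ‖(W10 + Δ1) * X - W10 * X‖ ≤ R * (1.2 * ‖X‖) := by
    rw [← Matrix.sub_mul, add_sub_cancel_left]
    nlinarith [l2_opNorm_mul Δ1 X, l2_opNorm_le_frob Δ1, norm_nonneg Δ1, norm_nonneg X]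
  rw [Matrix.sub_mul, Matrix.mul_assoc, Matrix.mul_assoc, smax_eq_l2_opNorm, smax_eq_l2_opNorm,
    hpow]
  refine (norm_midProd_mul_sub_midProd_mul_le (A := fun k => Wmid0 k + Δmid k) hκ hR
    (Real.sqrt_pos.2 hm0) hB hQ hAB hPQ i hi hiL).trans_eq ?_
  ring

/-- perturbation bound for the bottom partial products applied to the data. -/
theorem perturbation_bottom_products :
    ∀ K : ℝ, 1 ≤ K → ∃ C > (0 : ℝ),
      ∀ (L m din dout r : ℕ), 2 ≤ L → 1 ≤ m → 1 ≤ din → 1 ≤ dout → dout ≤ m →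
      ∀ X : Matrix (Fin din) (Fin r) ℝ, X.rank = r →
      ∀ (W10 : Matrix (Fin m) (Fin din) ℝ) (Wmid0 : ℕ → Matrix (Fin m) (Fin m) ℝ)
        (WL0 : Matrix (Fin dout) (Fin m) ℝ),
      (∀ a b : ℕ, 1 < a → a ≤ b → b < L →
        smax (midProd Wmid0 a b) ≤ K * Real.sqrt L * (m : ℝ) ^ (((b : ℝ) - a + 1) / 2)) →
      (∀ a : ℕ, 1 ≤ a → a < L →
        smax (midProd Wmid0 2 a * W10 * X) ≤ 1.2 * (m : ℝ) ^ ((a : ℝ) / 2) * smax X) →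
      ∀ R : ℝ, 0 < R →
      ∀ (Δ1 : Matrix (Fin m) (Fin din) ℝ) (Δmid : ℕ → Matrix (Fin m) (Fin m) ℝ)
        (ΔL : Matrix (Fin dout) (Fin m) ℝ),
      frob Δ1 ≤ R → (∀ k, 2 ≤ k → k ≤ L - 1 → frob (Δmid k) ≤ R) → frob ΔL ≤ R →
      (m : ℝ) ≥ C * L ^ 3 * R ^ 2 * (smax X ^ 2 / smin X ^ 2) →
      ∀ i : ℕ, 1 ≤ i → i < L →
        smax ((midProd (fun k => Wmid0 k + Δmid k) 2 i * (W10 + Δ1) -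
            midProd Wmid0 2 i * W10) * X) ≤
          0.05 * (m : ℝ) ^ ((i : ℝ) / 2) * smin X := by
  intro K hK
  refine ⟨2304 * K ^ 2, by positivity, ?_⟩
  intro L m din dout r _ hm _ _ _ X hX W10 Wmid0 _ hW hWX R hR Δ1 Δmid _ hΔ1 hΔmid _ hwidth
    i hi hiL
  rcases Nat.eq_zero_or_pos r with rfl | hr
  · have hzero : ∀ A : Matrix (Fin m) (Fin 0) ℝ, smax A = 0 := fun A => by
      rw [smax_eq_l2_opNorm, Subsingleton.elim A 0, norm_zero]
    rw [hzero]
    exact mul_nonneg (by positivity) (smin_nonneg X)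
  have hσ : 0 < smin X := smin_pos_of_rank_eq hr X hX
  have hqX : K * √L * R / √m * (48 * L * smax X) ≤ smin X :=
    mul_div_sqrt_mul_le_of_sq_div_sq_le (by positivity) L.cast_nonneg hR.le (by exact_mod_cast hm)
      (by rw [smax_eq_l2_opNorm]; positivity) hσ hwidth
  exact (smax_midProd_mul_sub_midProd_mul_le hm hK hR.le hW hWX hΔ1 hΔmid hi hiL).trans
    (one_add_pow_sub_one_mul_le (by positivity) hσ (smin_le_smax hr X) (by positivity) hiL.le hqX)
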